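/- arXiv:1911.00397 — 4 statements merged into one kernel-verified Lean document; each statement's English description precedes it below -/
import Mathlib

section
/- The generalized Bellman operator H^w, defined by (H^w Q)(i,a) = w(R(i,a) + γ Σ_j P(j|i,a) max_b Q(j,b)) + (1-w) max_c Q(i,c), is a contraction in the max-norm with contraction factor 1 - w + γw; that is, ‖H^w P' - H^w Q‖_∞ ≤ (1-w+γw)‖P' - Q‖_∞ for all Q-functions P', Q. -/
lemma sup_diff_le_aux {A : Type*} [Fintype A] [Nonempty A] (f g : A → ℝ) (δ : ℝ)
    (h : ∀ b, |f b - g b| ≤ δ) : |(⨆ b, f b) - ⨆ b, g b| ≤ δ := by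
  rw [abs_sub_le_iff]
  constructor
  · rw [sub_le_iff_le_add]
    refine ciSup_le fun b => ?_
    have h1 := h b; rw [abs_sub_le_iff] at h1
    have h2 := le_ciSup (Set.Finite.bddAbove (Set.finite_range g)) b
    linarith [h1.1]
  · rw [sub_le_iff_le_add]
    refine ciSup_le fun b => ?_
    have h1 := h b; rw [abs_sub_le_iff] at h1
    have h2 := le_ciSup (Set.Finite.bddAbove (Set.finite_range f)) b
    linarith [h1.2]

/-- The generalized Bellman operator H^w is a max-norm contraction with factor 1-w+γw. -/
theorem stmt_3 {S A : Type*} [Fintype S] [Fintype A] [Nonempty S] [Nonempty A]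
    (γ w : ℝ) (Pm : S → A → S → ℝ) (R : S → A → ℝ)
    (hγ0 : 0 < γ) (hγ1 : γ < 1)
    (hP0 : ∀ i a j, 0 ≤ Pm i a j) (hP1 : ∀ i a, ∑ j, Pm i a j = 1)
    (hw0 : 0 < w)
    (hw : w ≤ Finset.univ.inf' Finset.univ_nonempty
      (fun p : S × A => 1 / (1 - γ * Pm p.1 p.2 p.1)))
    (P' Q : S × A → ℝ) :
    ‖(fun p : S × A =>
        w * (R p.1 p.2 + γ * ∑ j, Pm p.1 p.2 j * (⨆ b, P' (j, b)))
          + (1 - w) * (⨆ c, P' (p.1, c))) -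
      (fun p : S × A =>
        w * (R p.1 p.2 + γ * ∑ j, Pm p.1 p.2 j * (⨆ b, Q (j, b)))
          + (1 - w) * (⨆ c, Q (p.1, c)))‖
      ≤ (1 - w + γ * w) * ‖P' - Q‖ := by
  classical
  set δ := ‖P' - Q‖ with hδ
  have hδ0 : 0 ≤ δ := norm_nonneg _
  set M' : S → ℝ := fun j => ⨆ b, P' (j, b) with hM'
  set M : S → ℝ := fun j => ⨆ b, Q (j, b) with hM
  have hΔ : ∀ j, |M' j - M j| ≤ δ := by
    intro j
    refine sup_diff_le_aux _ _ _ fun b => ?_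
    have := norm_le_pi_norm (P' - Q) (j, b)
    simpa [Real.norm_eq_abs] using this
  -- key positivity facts per (i,a)
  have hPle1 : ∀ i a (j : S), Pm i a j ≤ 1 := by
    intro i a j
    calc Pm i a j ≤ ∑ k, Pm i a k :=
      Finset.single_le_sum (fun k _ => hP0 i a k) (Finset.mem_univ j)
    _ = 1 := hP1 i a
  have hkey : ∀ i a, 0 ≤ 1 - w + γ * w * Pm i a i := by
    intro i a
    have hd : 0 < 1 - γ * Pm i a i := by
      have : γ * Pm i a i ≤ γ * 1 := by
        apply mul_le_mul_of_nonneg_left (hPle1 i a i) hγ0.le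
      linarith
    have hw' : w ≤ 1 / (1 - γ * Pm i a i) := by
      refine hw.trans (Finset.inf'_le _ (Finset.mem_univ (⟨i, a⟩ : S × A)))
    rw [le_div_iff₀ hd] at hw'
    nlinarith
  have hfac : 0 ≤ 1 - w + γ * w := by
    set i := Classical.arbitrary S
    set a := Classical.arbitrary A
    have h1 := hkey i a
    have h2 : 0 ≤ γ * w * (1 - Pm i a i) :=
      mul_nonneg (mul_nonneg hγ0.le hw0.le) (sub_nonneg.mpr (hPle1 i a i))
    nlinarith
  rw [pi_norm_le_iff_of_nonneg (by positivity)]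
  intro p
  obtain ⟨i, a⟩ := p
  rw [Real.norm_eq_abs]
  have hsum : (∑ j, Pm i a j * M' j) - (∑ j, Pm i a j * M j)
      = ∑ j, Pm i a j * (M' j - M j) := by
    rw [← Finset.sum_sub_distrib]
    exact Finset.sum_congr rfl fun j _ => by ring
  have hsplit : ∑ j, Pm i a j * (M' j - M j)
      = Pm i a i * (M' i - M i) + ∑ j ∈ Finset.univ.erase i, Pm i a j * (M' j - M j) :=
    (Finset.add_sum_erase _ _ (Finset.mem_univ i)).symm
  have hval : (fun p : S × A =>
        w * (R p.1 p.2 + γ * ∑ j, Pm p.1 p.2 j * (⨆ b, P' (j, b)))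
          + (1 - w) * (⨆ c, P' (p.1, c))) (i, a) -
      (fun p : S × A =>
        w * (R p.1 p.2 + γ * ∑ j, Pm p.1 p.2 j * (⨆ b, Q (j, b)))
          + (1 - w) * (⨆ c, Q (p.1, c))) (i, a)
      = (1 - w + γ * w * Pm i a i) * (M' i - M i)
        + γ * w * ∑ j ∈ Finset.univ.erase i, Pm i a j * (M' j - M j) := by
    simp only [← hM, ← hM']
    have : (∑ j, Pm i a j * M' j) - (∑ j, Pm i a j * M j)
        = Pm i a i * (M' i - M i) + ∑ j ∈ Finset.univ.erase i, Pm i a j * (M' j - M j) := by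
      rw [hsum, hsplit]
    nlinarith [this]
  simp only [Pi.sub_apply]
  rw [show (fun p : S × A =>
        w * (R p.1 p.2 + γ * ∑ j, Pm p.1 p.2 j * (⨆ b, P' (j, b)))
          + (1 - w) * (⨆ c, P' (p.1, c))) (i, a) -
      (fun p : S × A =>
        w * (R p.1 p.2 + γ * ∑ j, Pm p.1 p.2 j * (⨆ b, Q (j, b)))
          + (1 - w) * (⨆ c, Q (p.1, c))) (i, a)
      = (1 - w + γ * w * Pm i a i) * (M' i - M i)
        + γ * w * ∑ j ∈ Finset.univ.erase i, Pm i a j * (M' j - M j) from hval]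
  calc |(1 - w + γ * w * Pm i a i) * (M' i - M i)
        + γ * w * ∑ j ∈ Finset.univ.erase i, Pm i a j * (M' j - M j)|
      ≤ |(1 - w + γ * w * Pm i a i) * (M' i - M i)|
        + |γ * w * ∑ j ∈ Finset.univ.erase i, Pm i a j * (M' j - M j)| := abs_add_le _ _
    _ ≤ (1 - w + γ * w * Pm i a i) * δ
        + γ * w * ((1 - Pm i a i) * δ) := by
        apply add_le_add
        · rw [abs_mul, abs_of_nonneg (hkey i a)]
          exact mul_le_mul_of_nonneg_left (hΔ i) (hkey i a)
        · rw [abs_mul, abs_of_nonneg (by positivity : (0:ℝ) ≤ γ * w)]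
          apply mul_le_mul_of_nonneg_left _ (by positivity)
          have hsum' : ∑ j ∈ Finset.univ.erase i, Pm i a j = 1 - Pm i a i := by
            have := Finset.add_sum_erase Finset.univ (Pm i a) (Finset.mem_univ i)
            rw [hP1 i a] at this
            linarith
          calc |∑ j ∈ Finset.univ.erase i, Pm i a j * (M' j - M j)|
              ≤ ∑ j ∈ Finset.univ.erase i, |Pm i a j * (M' j - M j)| :=
                Finset.abs_sum_le_sum_abs _ _
            _ ≤ ∑ j ∈ Finset.univ.erase i, Pm i a j * δ := by
                apply Finset.sum_le_sum
                intro j _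
                rw [abs_mul, abs_of_nonneg (hP0 i a j)]
                exact mul_le_mul_of_nonneg_left (hΔ j) (hP0 i a j)
            _ = (1 - Pm i a i) * δ := by rw [← Finset.sum_mul, hsum']
    _ = (1 - w + γ * w) * δ := by ring
end

section
/- The fixed point Q* of the generalized Bellman operator H^w and the fixed point Q' of the standard Q-Bellman operator H satisfy max_a Q*(i,a) = max_a Q'(i,a) for every state i. -/
/-!
Both value functions `i ↦ max_a Q(i,a)` are fixed points of the Bellman optimality operator
`V ↦ (i ↦ max_a (R i a + γ ∑ⱼ P i a j V j))`: for `Q'` this is immediate, and for `Q*` the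
relaxation term `(1 - w) max_c Q*(i,c)` is constant in `a`, so it comes out of the maximum and
cancels. That operator is a `γ`-contraction for the sup metric, so its fixed point is unique.
-/

open Function

lemma dist_ciSup_ciSup_le {A : Type*} [Fintype A] [Nonempty A] (f g : A → ℝ) :
    dist (⨆ a, f a) (⨆ a, g a) ≤ dist f g := by
  have key : ∀ f g : A → ℝ, ⨆ a, f a ≤ (⨆ a, g a) + dist f g := fun f g =>
    ciSup_le fun a => by
      have hfg := (abs_le.mp ((Real.dist_eq _ _).symm ▸ dist_le_pi_dist f g a)).2
      linarith [le_ciSup (Finite.bddAbove_range g) a]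
  rw [Real.dist_eq, abs_sub_le_iff]
  exact ⟨by linarith [key f g], by linarith [key g f, dist_comm f g]⟩

lemma dist_sum_mul_le_of_sum_eq_one {S : Type*} [Fintype S] {p : S → ℝ}
    (hp0 : ∀ j, 0 ≤ p j) (hp1 : ∑ j, p j = 1) (V W : S → ℝ) :
    dist (∑ j, p j * V j) (∑ j, p j * W j) ≤ dist V W := by
  rw [Real.dist_eq, ← Finset.sum_sub_distrib]
  calc |∑ j, (p j * V j - p j * W j)| ≤ ∑ j, |p j * V j - p j * W j| :=
        Finset.abs_sum_le_sum_abs _ _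
    _ = ∑ j, p j * dist (V j) (W j) := by
        simp only [← mul_sub, abs_mul, abs_of_nonneg (hp0 _), Real.dist_eq]
    _ ≤ ∑ j, p j * dist V W :=
        Finset.sum_le_sum fun j _ => mul_le_mul_of_nonneg_left (dist_le_pi_dist V W j) (hp0 j)
    _ = dist V W := by rw [← Finset.sum_mul, hp1, one_mul]

section Bellman

variable {S A : Type*} [Fintype S]

noncomputable def bellmanOptimality (γ : ℝ) (P : S → A → S → ℝ) (R : S → A → ℝ)
    (V : S → ℝ) : S → ℝ :=
  fun i => ⨆ a, R i a + γ * ∑ j, P i a j * V j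

variable [Fintype A] [Nonempty A]

lemma contractingWith_bellmanOptimality {γ : ℝ} (hγ0 : 0 ≤ γ) (hγ1 : γ < 1)
    {P : S → A → S → ℝ} (hP0 : ∀ i a j, 0 ≤ P i a j) (hP1 : ∀ i a, ∑ j, P i a j = 1)
    (R : S → A → ℝ) : ContractingWith ⟨γ, hγ0⟩ (bellmanOptimality γ P R) := by
  refine ⟨by exact_mod_cast hγ1, LipschitzWith.of_dist_le_mul fun V W => ?_⟩
  have hγdist : 0 ≤ γ * dist V W := mul_nonneg hγ0 dist_nonneg
  refine (dist_pi_le_iff hγdist).mpr fun i => (dist_ciSup_ciSup_le _ _).trans ?_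
  refine (dist_pi_le_iff hγdist).mpr fun a => ?_
  rw [dist_add_left, dist_eq_norm, ← mul_sub, norm_mul, Real.norm_of_nonneg hγ0,
    ← dist_eq_norm]
  exact mul_le_mul_of_nonneg_left (dist_sum_mul_le_of_sum_eq_one (hP0 i a) (hP1 i a) V W) hγ0

lemma isFixedPt_bellmanOptimality_iSup {γ w : ℝ} {P : S → A → S → ℝ} {R : S → A → ℝ}
    (hw0 : 0 < w) {Q : S × A → ℝ}
    (hQ : ∀ i a, w * (R i a + γ * ∑ j, P i a j * (⨆ b, Q (j, b)))
        + (1 - w) * (⨆ c, Q (i, c)) = Q (i, a)) :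
    IsFixedPt (bellmanOptimality γ P R) fun i => ⨆ a, Q (i, a) := by
  funext i
  have hsup : (⨆ a, Q (i, a)) =
      w * bellmanOptimality γ P R (fun j => ⨆ b, Q (j, b)) i + (1 - w) * ⨆ c, Q (i, c) := by
    simp only [bellmanOptimality, Real.mul_iSup_of_nonneg hw0.le,
      ciSup_add (Finite.bddAbove_range _), hQ]
  have : w * (bellmanOptimality γ P R (fun j => ⨆ b, Q (j, b)) i - ⨆ a, Q (i, a)) = 0 := by
    linarith
  exact sub_eq_zero.mp ((mul_eq_zero.mp this).resolve_left hw0.ne')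

end Bellman

theorem stmt_9_general {S A : Type*} [Fintype S] [Fintype A] [Nonempty A]
    (γ w : ℝ) (P : S → A → S → ℝ) (R : S → A → ℝ)
    (hγ0 : 0 < γ) (hγ1 : γ < 1)
    (hP0 : ∀ i a j, 0 ≤ P i a j) (hP1 : ∀ i a, ∑ j, P i a j = 1)
    (hw0 : 0 < w)
    (Qs Q' : S × A → ℝ)
    (hQs : ∀ i a, w * (R i a + γ * ∑ j, P i a j * (⨆ b, Qs (j, b)))
        + (1 - w) * (⨆ c, Qs (i, c)) = Qs (i, a))
    (hQ' : ∀ i a, R i a + γ * ∑ j, P i a j * (⨆ b, Q' (j, b)) = Q' (i, a)) :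
    ∀ i : S, (⨆ a, Qs (i, a)) = ⨆ a, Q' (i, a) := by
  have hV : IsFixedPt (bellmanOptimality γ P R) fun i => ⨆ a, Qs (i, a) :=
    isFixedPt_bellmanOptimality_iSup hw0 hQs
  have hV' : IsFixedPt (bellmanOptimality γ P R) fun i => ⨆ a, Q' (i, a) :=
    isFixedPt_bellmanOptimality_iSup one_pos fun i a => by
      rw [one_mul, sub_self, zero_mul, add_zero, hQ' i a]
  have hT := contractingWith_bellmanOptimality hγ0.le hγ1 hP0 hP1 R
  exact congrFun (hT.fixedPoint_unique' hV hV')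

/-- The fixed point Q* of H^w and the fixed point Q' of the standard Bellman operator H
have the same induced value function: max_a Q*(i,a) = max_a Q'(i,a) for every state i. -/
theorem stmt_9 {S A : Type*} [Fintype S] [Fintype A] [Nonempty S] [Nonempty A]
    (γ w : ℝ) (P : S → A → S → ℝ) (R : S → A → ℝ)
    (hγ0 : 0 < γ) (hγ1 : γ < 1)
    (hP0 : ∀ i a j, 0 ≤ P i a j) (hP1 : ∀ i a, ∑ j, P i a j = 1)
    (hw0 : 0 < w)
    (hw : w ≤ Finset.univ.inf' Finset.univ_nonempty
      (fun p : S × A => 1 / (1 - γ * P p.1 p.2 p.1)))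
    (Qs Q' : S × A → ℝ)
    (hQs : ∀ i a, w * (R i a + γ * ∑ j, P i a j * (⨆ b, Qs (j, b)))
        + (1 - w) * (⨆ c, Qs (i, c)) = Qs (i, a))
    (hQ' : ∀ i a, R i a + γ * ∑ j, P i a j * (⨆ b, Q' (j, b)) = Q' (i, a)) :
    ∀ i : S, (⨆ a, Qs (i, a)) = ⨆ a, Q' (i, a) :=
  stmt_9_general γ w P R hγ0 hγ1 hP0 hP1 hw0 Qs Q' hQs hQ'
end

section
/- Let H^w be a max-norm contraction with factor γ₁ ∈ [0,1) and fixed point Q*, and suppose ‖Q* − Q_0‖ ≤ 2V_max and Q_n = (1/n)(H^w Q_0 + (n−1)H^w Q_{n−1} − M_{n−1}) for all n ≥ 1, where M_n = Σ_{k=0}^n m_k. Then for all n ≥ 1, ‖Q* − Q_n‖ ≤ 2γ₁β₁V_max/n + (1/n) Σ_{k=1}^n γ₁^{n−k}‖M_{k−1}‖, where β₁ = 1/(1−γ₁). -/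
/-!
Write `eₙ = n ‖Q* - Qₙ‖`. Since `Q* = H^w Q*`, the recursion gives
`n (Q* - Qₙ) = (H^w Q* - H^w Q₀) + (n - 1)(H^w Q* - H^w Qₙ₋₁) + Mₙ₋₁`, so by the contraction
property `eₙ ≤ γ₁ eₙ₋₁ + γ₁ ‖Q* - Q₀‖ + ‖Mₙ₋₁‖` with `e₀ = 0`. Unrolling this linear recursion,
the constant terms sum to at most `γ₁ ‖Q* - Q₀‖ / (1 - γ₁)`, and the noise terms are weighted by
powers of `γ₁`.
-/

open Finset

theorem le_div_one_sub_add_sum_pow_mul_of_le {e b : ℕ → ℝ} {γ c : ℝ} (hγ0 : 0 ≤ γ)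
    (hγ1 : γ < 1) (hc : 0 ≤ c) (he0 : e 0 ≤ 0)
    (hstep : ∀ n, e (n + 1) ≤ γ * e n + c + b (n + 1)) (n : ℕ) :
    e n ≤ c / (1 - γ) + ∑ k ∈ Icc 1 n, γ ^ (n - k) * b k := by
  have h1γ : 0 < 1 - γ := sub_pos.2 hγ1
  induction n with
  | zero => simpa using he0.trans (div_nonneg hc h1γ.le)
  | succ n ih =>
    have hsum : ∑ k ∈ Icc 1 (n + 1), γ ^ (n + 1 - k) * b k
        = γ * ∑ k ∈ Icc 1 n, γ ^ (n - k) * b k + b (n + 1) := by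
      rw [sum_Icc_succ_top (by omega), mul_sum, Nat.sub_self, pow_zero, one_mul]
      congr 1
      refine sum_congr rfl fun k hk => ?_
      rw [Nat.sub_add_comm (mem_Icc.1 hk).2, pow_succ]
      ring
    have hgeom : γ * (c / (1 - γ)) + c = c / (1 - γ) := by
      field_simp
      ring
    calc e (n + 1) ≤ γ * e n + c + b (n + 1) := hstep n
      _ ≤ γ * (c / (1 - γ) + ∑ k ∈ Icc 1 n, γ ^ (n - k) * b k) + c + b (n + 1) := by gcongr
      _ = c / (1 - γ) + ∑ k ∈ Icc 1 (n + 1), γ ^ (n + 1 - k) * b k := by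
        rw [hsum]
        linarith

section AveragedIteration

variable {E : Type*} [NormedAddCommGroup E] [NormedSpace ℝ E] {H : E → E} {γ : ℝ} {q : E}
  {Q M : ℕ → E}

theorem succ_smul_sub_eq_of_averaged_iteration (hfix : H q = q)
    (hform : ∀ n : ℕ, 1 ≤ n →
      Q n = (1 / (n : ℝ)) • (H (Q 0) + ((n : ℝ) - 1) • H (Q (n - 1)) - M (n - 1))) (n : ℕ) :
    ((n : ℝ) + 1) • (q - Q (n + 1)) = (H q - H (Q 0)) + (n : ℝ) • (H q - H (Q n)) + M n := by
  have hn : (n : ℝ) + 1 ≠ 0 := by positivity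
  have hQ := hform (n + 1) (by omega)
  simp only [Nat.add_sub_cancel, Nat.cast_add, Nat.cast_one, add_sub_cancel_right] at hQ
  rw [hQ, smul_sub, smul_smul, one_div, mul_inv_cancel₀ hn, one_smul]
  nth_rewrite 1 [← hfix]
  module

theorem succ_mul_norm_sub_le_of_averaged_iteration
    (hcontr : ∀ X Y : E, ‖H X - H Y‖ ≤ γ * ‖X - Y‖) (hfix : H q = q)
    (hform : ∀ n : ℕ, 1 ≤ n →
      Q n = (1 / (n : ℝ)) • (H (Q 0) + ((n : ℝ) - 1) • H (Q (n - 1)) - M (n - 1))) (n : ℕ) :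
    ((n + 1 : ℕ) : ℝ) * ‖q - Q (n + 1)‖
      ≤ γ * ((n : ℝ) * ‖q - Q n‖) + γ * ‖q - Q 0‖ + ‖M n‖ := by
  have hn : (0 : ℝ) ≤ n := n.cast_nonneg
  calc ((n + 1 : ℕ) : ℝ) * ‖q - Q (n + 1)‖ = ‖((n : ℝ) + 1) • (q - Q (n + 1))‖ := by
        rw [norm_smul, Real.norm_of_nonneg (by positivity), Nat.cast_succ]
    _ = ‖(H q - H (Q 0)) + (n : ℝ) • (H q - H (Q n)) + M n‖ := by
        rw [succ_smul_sub_eq_of_averaged_iteration hfix hform]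
    _ ≤ ‖H q - H (Q 0)‖ + (n : ℝ) * ‖H q - H (Q n)‖ + ‖M n‖ := by
        grw [norm_add₃_le, norm_smul, Real.norm_of_nonneg hn]
    _ ≤ γ * ‖q - Q 0‖ + (n : ℝ) * (γ * ‖q - Q n‖) + ‖M n‖ := by
        grw [hcontr q (Q 0), hcontr q (Q n)]
    _ = γ * ((n : ℝ) * ‖q - Q n‖) + γ * ‖q - Q 0‖ + ‖M n‖ := by ring

end AveragedIteration

theorem stmt_11_general {S A : Type*} [Fintype S] [Fintype A]
    (Hw : (S × A → ℝ) → (S × A → ℝ)) (γ₁ Vmax : ℝ)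
    (hγ₁0 : 0 ≤ γ₁) (hγ₁1 : γ₁ < 1)
    (hcontr : ∀ X Y : S × A → ℝ, ‖Hw X - Hw Y‖ ≤ γ₁ * ‖X - Y‖)
    (Qs : S × A → ℝ) (hfix : Hw Qs = Qs)
    (Q : ℕ → (S × A → ℝ)) (M : ℕ → (S × A → ℝ))
    (h0 : ‖Qs - Q 0‖ ≤ 2 * Vmax)
    (hform : ∀ n : ℕ, 1 ≤ n →
      Q n = (1 / (n : ℝ)) • (Hw (Q 0) + ((n : ℝ) - 1) • Hw (Q (n - 1)) - M (n - 1))) :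
    ∀ n : ℕ, 1 ≤ n →
      ‖Qs - Q n‖ ≤ 2 * γ₁ * (1 / (1 - γ₁)) * Vmax / n +
        (1 / (n : ℝ)) * ∑ k ∈ Finset.Icc 1 n, γ₁ ^ (n - k) * ‖M (k - 1)‖ := by
  intro n hn
  have hn0 : (0 : ℝ) < n := by exact_mod_cast hn
  have h1γ : 0 < 1 - γ₁ := sub_pos.2 hγ₁1
  have hunrolled := le_div_one_sub_add_sum_pow_mul_of_le (e := fun n => n * ‖Qs - Q n‖)
    (b := fun k => ‖M (k - 1)‖) hγ₁0 hγ₁1 (by positivity) (by simp)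
    (succ_mul_norm_sub_le_of_averaged_iteration hcontr hfix hform) n
  have hinit : γ₁ * ‖Qs - Q 0‖ / (1 - γ₁) ≤ 2 * γ₁ * (1 / (1 - γ₁)) * Vmax :=
    calc γ₁ * ‖Qs - Q 0‖ / (1 - γ₁) ≤ γ₁ * (2 * Vmax) / (1 - γ₁) := by gcongr
      _ = 2 * γ₁ * (1 / (1 - γ₁)) * Vmax := by ring
  have hsplit : 2 * γ₁ * (1 / (1 - γ₁)) * Vmax / n +
      (1 / (n : ℝ)) * ∑ k ∈ Finset.Icc 1 n, γ₁ ^ (n - k) * ‖M (k - 1)‖ =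
      (2 * γ₁ * (1 / (1 - γ₁)) * Vmax + ∑ k ∈ Finset.Icc 1 n, γ₁ ^ (n - k) * ‖M (k - 1)‖) / n := by
    ring
  rw [hsplit, le_div_iff₀ hn0]
  linarith

/-- Lemma 3: error propagation bound for the GSQL iterates. -/
theorem stmt_11 {S A : Type*} [Fintype S] [Fintype A] [Nonempty S] [Nonempty A]
    (Hw : (S × A → ℝ) → (S × A → ℝ)) (γ₁ Vmax : ℝ)
    (hγ₁0 : 0 ≤ γ₁) (hγ₁1 : γ₁ < 1) (hV : 0 < Vmax)
    (hcontr : ∀ X Y : S × A → ℝ, ‖Hw X - Hw Y‖ ≤ γ₁ * ‖X - Y‖)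
    (Qs : S × A → ℝ) (hfix : Hw Qs = Qs)
    (Q : ℕ → (S × A → ℝ)) (m : ℕ → (S × A → ℝ)) (M : ℕ → (S × A → ℝ))
    (hM : ∀ n : ℕ, M n = ∑ k ∈ Finset.range (n + 1), m k)
    (h0 : ‖Qs - Q 0‖ ≤ 2 * Vmax)
    (hQ0 : ‖Q 0‖ ≤ Vmax) (hQs : ‖Qs‖ ≤ Vmax)
    (hform : ∀ n : ℕ, 1 ≤ n →
      Q n = (1 / (n : ℝ)) • (Hw (Q 0) + ((n : ℝ) - 1) • Hw (Q (n - 1)) - M (n - 1))) :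
    ∀ n : ℕ, 1 ≤ n →
      ‖Qs - Q n‖ ≤ 2 * γ₁ * (1 / (1 - γ₁)) * Vmax / n +
        (1 / (n : ℝ)) * ∑ k ∈ Finset.Icc 1 n, γ₁ ^ (n - k) * ‖M (k - 1)‖ :=
  stmt_11_general Hw γ₁ Vmax hγ₁0 hγ₁1 hcontr Qs hfix Q M h0 hform
end

section
/- Define D_n[Q_n,Q_{n−1}](i,a) = n H^w_n Q_n(i,a) − (n−1) H^w_n Q_{n−1}(i,a) where H^w_n Q(i,a) = wR(i,a) + γ₁ max_a Q(j'_n,a), and suppose Q_{n+1} = (n/(n+1))Q_n + (1/(n+1)) D_n[Q_n,Q_{n−1}] with Q_{-1} = Q_0 and ‖Q_0‖ ≤ V_max. Then ‖D_n[Q_n,Q_{n−1}]‖ ≤ V_max for all n ≥ 0, where V_max = R_max/(1−γ), γ₁ = 1−w+γw ∈ [0,1), and ‖R‖ ≤ R_max. -/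
lemma abs_ciSup_le_aux {A : Type*} [Fintype A] [Nonempty A] (f : A → ℝ) (C : ℝ)
    (h : ∀ b, |f b| ≤ C) : |⨆ b, f b| ≤ C := by
  rw [abs_le]
  constructor
  · obtain ⟨b⟩ := (inferInstance : Nonempty A)
    exact le_trans (abs_le.mp (h b)).1 (le_ciSup (Set.Finite.bddAbove (Set.finite_range f)) b)
  · exact ciSup_le fun b => (abs_le.mp (h b)).2

lemma abs_ciSup_sub_ciSup_le_aux {A : Type*} [Fintype A] [Nonempty A] (f g : A → ℝ) (C : ℝ)
    (h : ∀ b, |f b - g b| ≤ C) : |(⨆ b, f b) - ⨆ b, g b| ≤ C := by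
  rw [abs_le]
  constructor
  · rw [neg_le, neg_sub, sub_le_iff_le_add]
    refine ciSup_le fun b => ?_
    have h1 := (abs_le.mp (h b)).1
    have h2 := le_ciSup (Set.Finite.bddAbove (Set.finite_range f)) b
    linarith
  · rw [sub_le_iff_le_add]
    refine ciSup_le fun b => ?_
    have h1 := (abs_le.mp (h b)).2
    have h2 := le_ciSup (Set.Finite.bddAbove (Set.finite_range g)) b
    linarith

/-- Boundedness of the D_n operators: ‖D_n[Q_n,Q_{n−1}]‖ ≤ V_max for all n ≥ 0. -/
theorem stmt_12 {S A : Type*} [Fintype S] [Fintype A] [Nonempty S] [Nonempty A]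
    (γ w γ₁ Rmax Vmax : ℝ) (R : S → A → ℝ) (j' : ℕ → S → A → S)
    (hγ0 : 0 < γ) (hγ1 : γ < 1) (hw0 : 0 < w)
    (hγ₁ : γ₁ = 1 - w + γ * w) (hγ₁0 : 0 ≤ γ₁) (hγ₁1 : γ₁ < 1)
    (hVmax : Vmax = Rmax / (1 - γ))
    (hR : ∀ i a, |R i a| ≤ Rmax)
    (Q : ℕ → (S × A → ℝ)) (D : ℕ → (S × A → ℝ))
    (hD : ∀ n : ℕ, ∀ i : S, ∀ a : A, D n (i, a) =
      (n : ℝ) * (w * R i a + γ₁ * (⨆ b, Q n (j' n i a, b)))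
        - ((n : ℝ) - 1) * (w * R i a + γ₁ * (⨆ b, Q (n - 1) (j' n i a, b))))
    (hrec : ∀ n : ℕ, Q (n + 1) = ((n : ℝ) / (n + 1)) • Q n + (1 / ((n : ℝ) + 1)) • D n)
    (hQ0 : ‖Q 0‖ ≤ Vmax) :
    ∀ n : ℕ, ‖D n‖ ≤ Vmax := by
  obtain ⟨i₀⟩ := (inferInstance : Nonempty S)
  obtain ⟨a₀⟩ := (inferInstance : Nonempty A)
  have hRmax0 : 0 ≤ Rmax := le_trans (abs_nonneg _) (hR i₀ a₀)
  have hVmax0 : 0 ≤ Vmax := by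
    rw [hVmax]; exact div_nonneg hRmax0 (by linarith)
  have hkey : w * Rmax + γ₁ * Vmax = Vmax := by
    have h1γ : (1 - γ) ≠ 0 := by linarith
    rw [hγ₁, hVmax]
    field_simp
    ring
  -- key pointwise bound
  intro n
  induction n with
  | zero =>
    rw [pi_norm_le_iff_of_nonneg hVmax0]
    rintro ⟨i, a⟩
    rw [Real.norm_eq_abs, hD 0 i a]
    simp only [Nat.cast_zero, Nat.zero_sub, zero_mul, zero_sub, neg_mul, one_mul,
      sub_neg_eq_add, zero_add, neg_neg]
    have hsup : |⨆ b, Q 0 (j' 0 i a, b)| ≤ Vmax := by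
      refine abs_ciSup_le_aux _ _ fun b => ?_
      calc |Q 0 (j' 0 i a, b)| = ‖Q 0 (j' 0 i a, b)‖ := rfl
        _ ≤ ‖Q 0‖ := norm_le_pi_norm _ _
        _ ≤ Vmax := hQ0
    calc |w * R i a + γ₁ * ⨆ b, Q 0 (j' 0 i a, b)|
        ≤ |w * R i a| + |γ₁ * ⨆ b, Q 0 (j' 0 i a, b)| := abs_add_le _ _
      _ ≤ w * Rmax + γ₁ * Vmax := by
          rw [abs_mul, abs_mul, abs_of_pos hw0, abs_of_nonneg hγ₁0]
          have := hR i a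
          nlinarith [abs_nonneg (R i a), hsup, abs_nonneg (⨆ b, Q 0 (j' 0 i a, b))]
      _ = Vmax := hkey
  | succ n ih =>
    rw [pi_norm_le_iff_of_nonneg hVmax0]
    rintro ⟨i, a⟩
    rw [Real.norm_eq_abs, hD (n + 1) i a]
    set x := j' (n + 1) i a with hx
    set S₁ := ⨆ b, Q (n + 1) (x, b) with hS₁
    have hsub : n + 1 - 1 = n := rfl
    rw [hsub]
    set S₀ := ⨆ b, Q n (x, b) with hS₀
    -- (n+1)*Q(n+1) = n*Qn + Dn pointwise
    have hpt : ∀ b : A, ((n : ℝ) + 1) * Q (n + 1) (x, b) = (n : ℝ) * Q n (x, b) + D n (x, b) := by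
      intro b
      have := congrFun (hrec n) (x, b)
      simp only [Pi.add_apply, Pi.smul_apply, smul_eq_mul] at this
      have hne : ((n : ℝ) + 1) ≠ 0 := by positivity
      field_simp at this
      linarith [this]
    have hDn : ∀ b : A, |D n (x, b)| ≤ Vmax := by
      intro b
      calc |D n (x, b)| = ‖D n (x, b)‖ := rfl
        _ ≤ ‖D n‖ := norm_le_pi_norm _ _
        _ ≤ Vmax := ih
    -- rewrite (n+1)*S₁
    have hmul1 : ((n : ℝ) + 1) * S₁ = ⨆ b, ((n : ℝ) + 1) * Q (n + 1) (x, b) := by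
      rw [hS₁]; exact Real.mul_iSup_of_nonneg (by positivity) _
    have hmul0 : (n : ℝ) * S₀ = ⨆ b, (n : ℝ) * Q n (x, b) := by
      rw [hS₀]; exact Real.mul_iSup_of_nonneg (Nat.cast_nonneg n) _
    have hdiff : |((n : ℝ) + 1) * S₁ - (n : ℝ) * S₀| ≤ Vmax := by
      rw [hmul1, hmul0]
      refine abs_ciSup_sub_ciSup_le_aux _ _ _ fun b => ?_
      rw [hpt b]
      simpa using hDn b
    have hcast : ((n + 1 : ℕ) : ℝ) = (n : ℝ) + 1 := by push_cast; ring
    rw [hcast]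
    have halg : ((n : ℝ) + 1) * (w * R i a + γ₁ * S₁) - ((n : ℝ) + 1 - 1) * (w * R i a + γ₁ * S₀)
        = w * R i a + γ₁ * (((n : ℝ) + 1) * S₁ - (n : ℝ) * S₀) := by ring
    rw [halg]
    calc |w * R i a + γ₁ * (((n : ℝ) + 1) * S₁ - (n : ℝ) * S₀)|
        ≤ |w * R i a| + |γ₁ * (((n : ℝ) + 1) * S₁ - (n : ℝ) * S₀)| := abs_add_le _ _
      _ ≤ w * Rmax + γ₁ * Vmax := by
          rw [abs_mul, abs_mul, abs_of_pos hw0, abs_of_nonneg hγ₁0]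
          have := hR i a
          nlinarith [abs_nonneg (R i a), hdiff,
            abs_nonneg (((n : ℝ) + 1) * S₁ - (n : ℝ) * S₀)]
      _ = Vmax := hkey
end
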